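/- There is a universal constant c > 0 with the following property. Let d ≥ 4 be even, 0 < ε < 1/2, and 0 < p⋆ ≤ 1/(2(d+1)). Let M̄ = M_{U_d} ∈ G_{p⋆} be the reference chain whose last row is the uniform distribution U_d on [d], and for each sign vector σ ∈ {−1,+1}^{d/2} let M_σ = M_{p_σ} ∈ G_{p⋆} where p_σ = ((1+σ₁ε)/d, (1−σ₁ε)/d, …, (1+σ_{d/2}ε)/d, (1−σ_{d/2}ε)/d). Then ∑_{j∈[d]} |p_σ(j) − 1/d| = ε for every σ, and for every m ≤ c·√d/(ε²·p⋆) and every randomized test T : [d+1]^m → [0,1] (T(x) being the probability of outputting 1 on input x), one has E_{M̄,p}[T(X₁,…,X_m)] + 2^{−d/2} ∑_{σ∈{−1,+1}^{d/2}} E_{M_σ,p}[1−T(X₁,…,X_m)] ≥ 1/10. -/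

import Mathlib

open Finset

noncomputable section

/-- A row-stochastic matrix. -/
def IsStochastic {d : ℕ} (M : Matrix (Fin d) (Fin d) ℝ) : Prop :=
  (∀ i j, 0 ≤ M i j) ∧ ∀ i, ∑ j, M i j = 1

/-- A probability distribution on `Fin d`. -/
def IsDist {d : ℕ} (μ : Fin d → ℝ) : Prop :=
  (∀ i, 0 ≤ μ i) ∧ ∑ i, μ i = 1

/-- Probability of a length-`m` trajectory under the Markov chain `(M, μ)`:
`μ(x₁) ∏_{t=1}^{m-1} M(x_t, x_{t+1})`. -/
def trajP {d m : ℕ} (M : Matrix (Fin d) (Fin d) ℝ) (μ : Fin d → ℝ)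
    (x : Fin m → Fin d) : ℝ :=
  (if h : 0 < m then μ (x ⟨0, h⟩) else 1) *
    ∏ t : Fin (m - 1),
      M (x ⟨t.1, by have h2 := t.2; omega⟩) (x ⟨t.1 + 1, by have h2 := t.2; omega⟩)


/-- The distribution `p` on `[d+1]`: `p(d+1) = p⋆`, `p(i) = (1-p⋆)/d` for `i ∈ [d]`. -/
def pInit (d : ℕ) (ps : ℝ) : Fin (d + 1) → ℝ :=
  fun i => if i.1 = d then ps else (1 - ps) / d

/-- The chain `M_η ∈ G_{p⋆}`: rows `1,…,d` equal `p`, row `d+1` is `(η(1),…,η(d),0)`. -/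
def MG (d : ℕ) (ps : ℝ) (η : Fin d → ℝ) : Matrix (Fin (d + 1)) (Fin (d + 1)) ℝ :=
  Matrix.of fun i j =>
    if i.1 = d then (if h : j.1 = d then 0 else η ⟨j.1, by have h2 := j.2; omega⟩)
    else pInit d ps j

/-- Number of visits to state `d+1` in a trajectory. -/
def Nlast (d m : ℕ) (x : Fin m → Fin (d + 1)) : ℕ :=
  (Finset.univ.filter (fun t => (x t).1 = d)).card

/-- The perturbed distribution `p_σ` on `[d]` (`d = 2k`):
`p_σ(2i-1) = (1+σ_i ε)/d`, `p_σ(2i) = (1-σ_i ε)/d`. -/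
def pSigma (k : ℕ) (ε : ℝ) (σ : Fin k → Bool) : Fin (2 * k) → ℝ :=
  fun j => (1 + (if σ ⟨j.1 / 2, by have h2 := j.2; omega⟩ then 1 else -1) *
      (if j.1 % 2 = 0 then (1 : ℝ) else -1) * ε) / (2 * (k : ℝ))

lemma trajP_succ {D m : ℕ} (M : Matrix (Fin D) (Fin D) ℝ) (μ : Fin D → ℝ)
    (x : Fin (m+1) → Fin D) :
    trajP M μ x = μ (x 0) * ∏ t : Fin m, M (x t.castSucc) (x t.succ) := by
  unfold trajP
  rw [dif_pos (Nat.succ_pos m)]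
  rfl

lemma trajP_zero {D : ℕ} (M : Matrix (Fin D) (Fin D) ℝ) (μ : Fin D → ℝ)
    (x : Fin 0 → Fin D) : trajP M μ x = 1 := by simp [trajP]

lemma sum_pi_succ {α : Type*} [Fintype α] (m : ℕ) (f : (Fin (m+1) → α) → ℝ) :
    ∑ x : Fin (m+1) → α, f x = ∑ a : α, ∑ y : Fin m → α, f (Fin.cons a y) := by
  rw [← Equiv.sum_comp (Fin.consEquiv (fun _ : Fin (m+1) => α)) f, Fintype.sum_prod_type]
  rfl

lemma trajP_cons {D m : ℕ} (M : Matrix (Fin D) (Fin D) ℝ) (μ : Fin D → ℝ)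
    (a : Fin D) (y : Fin m → Fin D) :
    trajP M μ (Fin.cons a y : Fin (m+1) → Fin D) = μ a * trajP M (fun j => M a j) y := by
  cases m with
  | zero => simp [trajP]
  | succ n =>
    rw [trajP_succ, trajP_succ, Fin.cons_zero, Fin.prod_univ_succ]
    simp only [Fin.castSucc_zero, Fin.cons_zero, ← Fin.succ_castSucc, Fin.cons_succ]

def sT {D : ℕ} (M : Matrix (Fin D) (Fin D) ℝ) (μ : Fin D → ℝ) (m : ℕ) : ℝ :=
  ∑ x : Fin m → Fin D, trajP M μ x

lemma sT_zero {D : ℕ} (M : Matrix (Fin D) (Fin D) ℝ) (μ : Fin D → ℝ) : sT M μ 0 = 1 := by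
  simp [sT, trajP]

lemma sT_succ {D : ℕ} (M : Matrix (Fin D) (Fin D) ℝ) (μ : Fin D → ℝ) (m : ℕ) :
    sT M μ (m+1) = ∑ a, μ a * sT M (fun j => M a j) m := by
  unfold sT
  rw [sum_pi_succ]
  congr 1; funext a
  rw [Finset.mul_sum]
  exact Finset.sum_congr rfl fun y _ => trajP_cons M μ a y

lemma trajP_nonneg {D m : ℕ} {M : Matrix (Fin D) (Fin D) ℝ} {μ : Fin D → ℝ}
    (hM : ∀ i j, 0 ≤ M i j) (hμ : ∀ i, 0 ≤ μ i) (x : Fin m → Fin D) :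
    0 ≤ trajP M μ x := by
  unfold trajP
  apply mul_nonneg
  · split <;> simp [hμ]
  · exact Finset.prod_nonneg fun t _ => hM _ _

-- row lemmas
lemma MG_row_ne {d : ℕ} (ps : ℝ) (η : Fin d → ℝ) (a : Fin (d+1)) (ha : a.1 ≠ d) :
    (fun j => MG d ps η a j) = pInit d ps := by
  funext j; simp [MG, ha]

lemma MG_row_last {d : ℕ} (ps : ℝ) (η : Fin d → ℝ) (a : Fin (d+1)) (ha : a.1 = d) :
    (fun j => MG d ps η a j)
      = (fun j => if h : j.1 = d then 0 else η ⟨j.1, by have := j.2; omega⟩) := by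
  funext j; simp [MG, ha]

lemma sum_pInit {d : ℕ} (hd : 0 < d) (ps : ℝ) : ∑ j, pInit d ps j = 1 := by
  rw [Fin.sum_univ_castSucc]
  have h1 : ∀ j : Fin d, pInit d ps j.castSucc = (1 - ps) / d := by
    intro j
    have hj : (j:ℕ) ≠ d := by have := j.2; omega
    simp [pInit, Fin.coe_castSucc, hj]
  rw [Finset.sum_congr rfl fun j _ => h1 j]
  simp [pInit, Fin.last]
  field_simp
  ring

/-- `u η m` -/
def uT (d : ℕ) (ps : ℝ) (η : Fin d → ℝ) (m : ℕ) : ℝ := sT (MG d ps η) (pInit d ps) m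

def vT (d : ℕ) (ps : ℝ) (η : Fin d → ℝ) (m : ℕ) : ℝ :=
  sT (MG d ps η) (fun j => if h : j.1 = d then 0 else η ⟨j.1, by have := j.2; omega⟩) m

lemma sT_dist {D : ℕ} (M : Matrix (Fin D) (Fin D) ℝ) (μ : Fin D → ℝ) (m : ℕ) :
    sT M μ (m+1) = ∑ a, μ a * sT M (fun j => M a j) m := sT_succ M μ m

lemma uT_succ {d : ℕ} (hd : 0 < d) (ps : ℝ) (η : Fin d → ℝ) (m : ℕ) :
    uT d ps η (m+1) = (1 - ps) * uT d ps η m + ps * vT d ps η m := by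
  unfold uT
  rw [sT_succ, Fin.sum_univ_castSucc]
  have hrow : ∀ a : Fin d, (fun j => MG d ps η a.castSucc j) = pInit d ps := by
    intro a
    exact MG_row_ne ps η a.castSucc (by have := a.2; simp [Fin.coe_castSucc]; omega)
  have hlast : (fun j => MG d ps η (Fin.last d) j)
      = (fun j : Fin (d+1) => if h : j.1 = d then 0 else η ⟨j.1, by have := j.2; omega⟩) :=
    MG_row_last ps η (Fin.last d) rfl
  have h1 : ∀ a : Fin d, pInit d ps a.castSucc = (1 - ps)/d := by
    intro a
    have hj : (a:ℕ) ≠ d := by have := a.2; omega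
    simp [pInit, Fin.coe_castSucc, hj]
  calc (∑ a : Fin d, pInit d ps a.castSucc * sT (MG d ps η) (fun j => MG d ps η a.castSucc j) m)
        + pInit d ps (Fin.last d) * sT (MG d ps η) (fun j => MG d ps η (Fin.last d) j) m
      = (∑ _a : Fin d, (1-ps)/d * uT d ps η m) + ps * vT d ps η m := by
        congr 1
        · exact Finset.sum_congr rfl fun a _ => by rw [hrow a, h1 a]; rfl
        · rw [hlast]; simp [pInit, Fin.last, vT]
    _ = (1 - ps) * uT d ps η m + ps * vT d ps η m := by
        rw [Finset.sum_const]
        simp only [Finset.card_univ, Fintype.card_fin, nsmul_eq_mul]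
        congr 1
        have hd' : (d:ℝ) ≠ 0 := Nat.cast_ne_zero.mpr (by omega)
        field_simp

lemma vT_succ {d : ℕ} (hd : 0 < d) (ps : ℝ) (η : Fin d → ℝ) (m : ℕ) :
    vT d ps η (m+1) = (∑ j : Fin d, η j) * uT d ps η m := by
  unfold vT
  rw [sT_succ, Fin.sum_univ_castSucc]
  have hrow : ∀ a : Fin d, (fun j => MG d ps η a.castSucc j) = pInit d ps := by
    intro a
    exact MG_row_ne ps η a.castSucc (by have := a.2; simp [Fin.coe_castSucc]; omega)
  have h2 : ∀ a : Fin d,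
      (if h : (a.castSucc : Fin (d+1)).1 = d then (0:ℝ) else η ⟨(a.castSucc).1, by have := a.castSucc.2; omega⟩)
        = η a := by
    intro a
    have hj : (a:ℕ) ≠ d := by have := a.2; omega
    have hj' : ((a.castSucc : Fin (d+1)) : ℕ) ≠ d := by
      rw [Fin.coe_castSucc]; exact hj
    rw [dif_neg hj']
    exact congrArg η (Fin.ext rfl)
  calc (∑ a : Fin d, _ * sT (MG d ps η) (fun j => MG d ps η a.castSucc j) m)
        + _ * sT (MG d ps η) (fun j => MG d ps η (Fin.last d) j) m
      = (∑ a : Fin d, η a * uT d ps η m) + 0 := by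
        congr 1
        · exact Finset.sum_congr rfl fun a _ => by rw [hrow a, h2 a]; rfl
        · simp [Fin.last]
    _ = (∑ j : Fin d, η j) * uT d ps η m := by rw [add_zero, Finset.sum_mul]

lemma uT_zero (d : ℕ) (ps : ℝ) (η : Fin d → ℝ) : uT d ps η 0 = 1 := sT_zero _ _

lemma uT_one {d : ℕ} (hd : 0 < d) (ps : ℝ) (η : Fin d → ℝ) : uT d ps η 1 = 1 := by
  unfold uT
  rw [sT_succ]
  have : ∀ a : Fin (d+1), pInit d ps a * sT (MG d ps η) (fun j => MG d ps η a j) 0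
      = pInit d ps a := by
    intro a; rw [sT_zero, mul_one]
  rw [Finset.sum_congr rfl fun a _ => this a, sum_pInit hd]

lemma uT_rec {d : ℕ} (hd : 0 < d) (ps : ℝ) (η : Fin d → ℝ) (m : ℕ) :
    uT d ps η (m+2) = (1-ps) * uT d ps η (m+1) + ps * ((∑ j, η j) * uT d ps η m) := by
  rw [uT_succ hd, vT_succ hd]

lemma uT_le_one {d : ℕ} (hd : 0 < d) {ps : ℝ} (hps0 : 0 ≤ ps) (hps1 : ps ≤ 1)
    {η : Fin d → ℝ} (hS0 : 0 ≤ ∑ j, η j) (hS1 : (∑ j, η j) ≤ 1) :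
    ∀ m, uT d ps η m ≤ 1 := by
  intro m
  induction m using Nat.strong_induction_on with
  | _ m ih =>
    match m with
    | 0 => rw [uT_zero]
    | 1 => rw [uT_one hd]
    | (n+2) =>
      rw [uT_rec hd]
      have h1 := ih (n+1) (by omega)
      have h0 := ih n (by omega)
      have e2 : (∑ j, η j) * uT d ps η n ≤ ∑ j, η j := by nlinarith
      have e3 : ps * ((∑ j, η j) * uT d ps η n) ≤ ps * (∑ j, η j) :=
        mul_le_mul_of_nonneg_left e2 hps0
      nlinarith

lemma uT_eq_one {d : ℕ} (hd : 0 < d) (ps : ℝ)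
    {η : Fin d → ℝ} (hS1 : (∑ j, η j) = 1) :
    ∀ m, uT d ps η m = 1 := by
  intro m
  induction m using Nat.strong_induction_on with
  | _ m ih =>
    match m with
    | 0 => rw [uT_zero]
    | 1 => rw [uT_one hd]
    | (n+2) =>
      rw [uT_rec hd, hS1, ih (n+1) (by omega), ih n (by omega)]
      ring

lemma uT_le_pow {d : ℕ} (hd : 0 < d) {ps : ℝ} (hps0 : 0 ≤ ps) (hps1 : ps ≤ 1)
    {η : Fin d → ℝ} (hS1 : 1 ≤ ∑ j, η j) :
    ∀ m, uT d ps η m ≤ (1 + ps * ((∑ j, η j) - 1))^m := by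
  intro m
  set S := ∑ j, η j with hS
  have hB : 1 ≤ 1 + ps * (S - 1) := by nlinarith
  induction m using Nat.strong_induction_on with
  | _ m ih =>
    match m with
    | 0 => rw [uT_zero, pow_zero]
    | 1 => rw [uT_one hd, pow_one]; linarith
    | (n+2) =>
      rw [uT_rec hd, ← hS]
      have h1 := ih (n+1) (by omega)
      have h0 := ih n (by omega)
      have hBp : (0:ℝ) ≤ (1 + ps * (S - 1))^n := by positivity
      have hBp1 : (1 + ps * (S - 1))^n ≤ (1 + ps * (S - 1))^(n+1) := by
        calc (1 + ps * (S - 1))^n = (1 + ps * (S - 1))^n * 1 := by ring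
          _ ≤ (1 + ps * (S - 1))^n * (1 + ps * (S-1)) := by nlinarith
          _ = (1 + ps * (S - 1))^(n+1) := by ring
      have key : (1-ps) * (1 + ps * (S - 1))^(n+1) + ps * (S * (1 + ps * (S - 1))^n)
          ≤ (1 + ps * (S - 1))^(n+2) := by
        have expand : (1 + ps * (S - 1))^(n+2)
            = (1 + ps * (S - 1))^(n+1) * (1 + ps * (S-1)) := by ring
        rw [expand]
        nlinarith [pow_nonneg (le_trans zero_le_one hB) (n+1)]
      calc (1-ps) * uT d ps η (n+1) + ps * (S * uT d ps η n)
          ≤ (1-ps) * (1 + ps * (S - 1))^(n+1) + ps * (S * (1 + ps * (S - 1))^n) := by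
            have hSn : 0 ≤ S := by linarith
            nlinarith
        _ ≤ _ := key

lemma pInit_pos {d : ℕ} (hd : 0 < d) {ps : ℝ} (h0 : 0 < ps) (h1 : ps < 1) (j : Fin (d+1)) :
    0 < pInit d ps j := by
  unfold pInit
  split
  · exact h0
  · apply div_pos (by linarith) (by positivity)

lemma MG_entry_nonneg {d : ℕ} {ps : ℝ} (h0 : 0 ≤ ps) (h1 : ps ≤ 1) {η : Fin d → ℝ}
    (hη : ∀ l, 0 ≤ η l) (i j : Fin (d+1)) : 0 ≤ MG d ps η i j := by
  unfold MG pInit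
  simp only [Matrix.of_apply]
  split
  · split
    · exact le_refl 0
    · exact hη _
  · split
    · exact h0
    · exact div_nonneg (by linarith) (by positivity)

/-- entrywise: `M_η(i,j) M_η'(i,j) = K(i,j) M̄(i,j)` with `K = MG (d η η')`, `M̄ = MG ū`. -/
lemma MG_entry_mul {d : ℕ} (hd : 0 < d) (ps : ℝ) (η η' : Fin d → ℝ) (i j : Fin (d+1)) :
    MG d ps η i j * MG d ps η' i j
      = MG d ps (fun l => d * η l * η' l) i j * MG d ps (fun _ => 1/(d:ℝ)) i j := by
  have hd' : (d:ℝ) ≠ 0 := Nat.cast_ne_zero.mpr (by omega)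
  unfold MG
  simp only [Matrix.of_apply]
  by_cases hi : i.1 = d
  · rw [if_pos hi, if_pos hi, if_pos hi, if_pos hi]
    by_cases hj : j.1 = d
    · rw [dif_pos hj, dif_pos hj, dif_pos hj]; ring
    · rw [dif_neg hj, dif_neg hj, dif_neg hj, dif_neg hj]
      field_simp
  · rw [if_neg hi, if_neg hi, if_neg hi, if_neg hi]

lemma trajP_mul {d m : ℕ} (hd : 0 < d) (ps : ℝ) (η η' : Fin d → ℝ)
    (x : Fin m → Fin (d+1)) :
    trajP (MG d ps η) (pInit d ps) x * trajP (MG d ps η') (pInit d ps) x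
      = trajP (MG d ps (fun l => d * η l * η' l)) (pInit d ps) x
        * trajP (MG d ps (fun _ => 1/(d:ℝ))) (pInit d ps) x := by
  cases m with
  | zero => simp [trajP]
  | succ n =>
    rw [trajP_succ, trajP_succ, trajP_succ, trajP_succ]
    have hp : (∏ t : Fin n, MG d ps η (x t.castSucc) (x t.succ))
        * (∏ t : Fin n, MG d ps η' (x t.castSucc) (x t.succ))
        = (∏ t : Fin n, MG d ps (fun l => d * η l * η' l) (x t.castSucc) (x t.succ))
          * (∏ t : Fin n, MG d ps (fun _ => 1/(d:ℝ)) (x t.castSucc) (x t.succ)) := by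
      rw [← Finset.prod_mul_distrib, ← Finset.prod_mul_distrib]
      exact Finset.prod_congr rfl fun t _ => MG_entry_mul hd ps η η' _ _
    rw [mul_mul_mul_comm, hp, ← mul_mul_mul_comm]

/-- zero pattern: if the reference trajectory probability vanishes, so does any `M_η` one. -/
lemma trajP_zero_pattern {d m : ℕ} (hd : 0 < d) {ps : ℝ} (h0 : 0 < ps) (h1 : ps < 1)
    (η : Fin d → ℝ) (x : Fin m → Fin (d+1))
    (hz : trajP (MG d ps (fun _ => 1/(d:ℝ))) (pInit d ps) x = 0) :
    trajP (MG d ps η) (pInit d ps) x = 0 := by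
  cases m with
  | zero => rw [trajP_zero] at hz; exact absurd hz one_ne_zero
  | succ n =>
    rw [trajP_succ] at hz ⊢
    rcases mul_eq_zero.mp hz with h | h
    · exact absurd h (ne_of_gt (pInit_pos hd h0 h1 _))
    · obtain ⟨t, _, ht⟩ := Finset.prod_eq_zero_iff.mp h
      have hent : (x t.castSucc).1 = d ∧ (x t.succ).1 = d := by
        by_contra hc
        revert ht
        unfold MG pInit
        simp only [Matrix.of_apply]
        by_cases hi : (x t.castSucc).1 = d
        · rw [if_pos hi]
          by_cases hj : (x t.succ).1 = d
          · exact fun _ => hc ⟨hi, hj⟩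
          · rw [dif_neg hj]
            intro hcc
            have : (d:ℝ) ≠ 0 := Nat.cast_ne_zero.mpr (by omega)
            simp at hcc
            exact this (by linarith)
        · rw [if_neg hi]
          intro hcc
          split at hcc
          · linarith
          · have hps : (0:ℝ) < 1 - ps := by linarith
            have : (0:ℝ) < (1-ps)/d := by positivity
            linarith
      apply mul_eq_zero_of_right
      apply Finset.prod_eq_zero (Finset.mem_univ t)
      unfold MG
      simp only [Matrix.of_apply]
      rw [if_pos hent.1, dif_pos hent.2]

lemma pair_sum {k : ℕ} (f : Fin (2*k) → ℝ) :
    ∑ j, f j = ∑ i : Fin k, (f ⟨2*i.1, by have := i.2; omega⟩ + f ⟨2*i.1+1, by have := i.2; omega⟩) := by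
  rw [← Equiv.sum_comp (finProdFinEquiv.trans (finCongr (mul_comm k 2))) f,
    Fintype.sum_prod_type]
  apply Finset.sum_congr rfl
  intro i _
  rw [Fin.sum_univ_two]
  congr 1
  · exact congrArg f (Fin.ext (by simp [finProdFinEquiv]; try omega))
  · exact congrArg f (Fin.ext (by simp [finProdFinEquiv]; try omega))

lemma pSigma_even {k : ℕ} (ε : ℝ) (σ : Fin k → Bool) (i : Fin k) (h : 2*i.1 < 2*k) :
    pSigma k ε σ ⟨2*i.1, h⟩ = (1 + (if σ i then 1 else -1) * ε)/(2*(k:ℝ)) := by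
  unfold pSigma
  have h2 : (2*i.1) % 2 = 0 := by omega
  have h3 : (2*i.1) / 2 = i.1 := by omega
  simp only [h2, h3, if_true, Fin.eta]
  norm_num

lemma pSigma_odd {k : ℕ} (ε : ℝ) (σ : Fin k → Bool) (i : Fin k) (h : 2*i.1+1 < 2*k) :
    pSigma k ε σ ⟨2*i.1+1, h⟩ = (1 - (if σ i then 1 else -1) * ε)/(2*(k:ℝ)) := by
  unfold pSigma
  have h2 : ¬((2*i.1+1) % 2 = 0) := by omega
  have h3 : (2*i.1+1) / 2 = i.1 := by omega
  simp only [h2, h3, if_false, Fin.eta]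
  norm_num
  ring_nf

lemma sum_abs_pSigma {k : ℕ} (hk : 2 ≤ k) {ε : ℝ} (hε : 0 < ε) (σ : Fin k → Bool) :
    ∑ j : Fin (2 * k), |pSigma k ε σ j - 1 / (2 * (k : ℝ))| = ε := by
  have hk' : (0:ℝ) < 2*(k:ℝ) := by positivity
  have heach : ∀ j : Fin (2*k), |pSigma k ε σ j - 1 / (2 * (k : ℝ))| = ε / (2*(k:ℝ)) := by
    intro j
    unfold pSigma
    have habs : ∀ a b : ℝ, (|a| = 1) → (|b| = 1) →
        |(1 + a * b * ε) / (2 * (k:ℝ)) - 1 / (2 * (k:ℝ))| = ε / (2*(k:ℝ)) := by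
      intro a b ha hb
      rw [div_sub_div_same, abs_div, abs_of_pos hk']
      congr 1
      rw [show 1 + a*b*ε - 1 = a*b*ε by ring, abs_mul, abs_mul, ha, hb, abs_of_pos hε]
      ring
    apply habs
    · split <;> simp
    · split <;> simp
  rw [Finset.sum_congr rfl fun j _ => heach j, Finset.sum_const]
  simp only [Finset.card_univ, Fintype.card_fin, nsmul_eq_mul]
  push_cast
  field_simp

lemma sum_pSigma {k : ℕ} (hk : 2 ≤ k) (ε : ℝ) (σ : Fin k → Bool) :
    ∑ j, pSigma k ε σ j = 1 := by
  rw [pair_sum]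
  have : ∀ i : Fin k, pSigma k ε σ ⟨2*i.1, by have := i.2; omega⟩
      + pSigma k ε σ ⟨2*i.1+1, by have := i.2; omega⟩ = 1/(k:ℝ) := by
    intro i
    rw [pSigma_even, pSigma_odd]
    have hk' : (k:ℝ) ≠ 0 := by positivity
    field_simp
    ring_nf
  rw [Finset.sum_congr rfl fun i _ => this i, Finset.sum_const]
  simp only [Finset.card_univ, Fintype.card_fin, nsmul_eq_mul]
  have hk' : (k:ℝ) ≠ 0 := by positivity
  field_simp

/-- cross sum: `∑_j 2k p_σ(j) p_σ'(j) = 1 + ε²/k * Z(σ,σ')` -/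
lemma sum_cross_pSigma {k : ℕ} (hk : 2 ≤ k) (ε : ℝ) (σ σ' : Fin k → Bool) :
    ∑ j, (2*(k:ℝ)) * pSigma k ε σ j * pSigma k ε σ' j
      = 1 + ε^2/(k:ℝ) * ∑ i : Fin k, (if σ i = σ' i then (1:ℝ) else -1) := by
  have hk' : (k:ℝ) ≠ 0 := by positivity
  rw [pair_sum]
  have : ∀ i : Fin k, ((2*(k:ℝ)) * pSigma k ε σ ⟨2*i.1, by have := i.2; omega⟩
          * pSigma k ε σ' ⟨2*i.1, by have := i.2; omega⟩
      + (2*(k:ℝ)) * pSigma k ε σ ⟨2*i.1+1, by have := i.2; omega⟩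
          * pSigma k ε σ' ⟨2*i.1+1, by have := i.2; omega⟩)
      = 1/(k:ℝ) + ε^2/(k:ℝ) * (if σ i = σ' i then (1:ℝ) else -1) := by
    intro i
    rw [pSigma_even, pSigma_odd, pSigma_even, pSigma_odd]
    rcases Bool.eq_false_or_eq_true (σ i) with h1 | h1 <;>
      rcases Bool.eq_false_or_eq_true (σ' i) with h2 | h2 <;>
      simp [h1, h2] <;> field_simp <;> ring
  rw [Finset.sum_congr rfl fun i _ => this i, Finset.sum_add_distrib, Finset.sum_const]
  simp only [Finset.card_univ, Fintype.card_fin, nsmul_eq_mul, ← Finset.mul_sum]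
  field_simp

lemma sum_prod_bool {k : ℕ} (g : Bool → ℝ) :
    ∑ τ : Fin k → Bool, ∏ i, g (τ i) = (g true + g false)^k := by
  induction k with
  | zero => simp
  | succ n ih =>
    rw [sum_pi_succ n (fun τ => ∏ i, g (τ i))]
    have : ∀ (a : Bool) (y : Fin n → Bool),
        ∏ i, g ((Fin.cons a y : Fin (n+1) → Bool) i) = g a * ∏ i, g (y i) := by
      intro a y
      rw [Fin.prod_univ_succ, Fin.cons_zero]
      simp only [Fin.cons_succ]
    calc ∑ a : Bool, ∑ y : Fin n → Bool, ∏ i, g ((Fin.cons a y : Fin (n+1) → Bool) i)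
        = ∑ a : Bool, g a * ∑ y : Fin n → Bool, ∏ i, g (y i) := by
          apply Finset.sum_congr rfl; intro a _
          rw [Finset.mul_sum]
          exact Finset.sum_congr rfl fun y _ => this a y
      _ = (g true + g false)^(n+1) := by
          rw [Fintype.sum_bool, ih]; ring

lemma sum_bij_beq {k : ℕ} (σ : Fin k → Bool) (F : (Fin k → Bool) → ℝ) :
    ∑ σ' : Fin k → Bool, F (fun i => σ i == σ' i) = ∑ τ, F τ := by
  apply Function.Bijective.sum_comp
  apply Function.Involutive.bijective
  intro σ'
  funext i
  cases h : σ i <;> simp [h]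

lemma exp_quad {x : ℝ} (hx : |x| ≤ 1) : Real.exp x ≤ 1 + x + x^2 := by
  have h := Real.exp_bound hx (n := 2) (by norm_num)
  have h2 : ∑ m ∈ Finset.range 2, x ^ m / m.factorial = 1 + x := by
    simp [Finset.sum_range_succ]
  rw [h2] at h
  have h3 : |x|^2 * ((2+1) / ((2:ℕ).factorial * 2)) = (3/4) * x^2 := by
    rw [sq_abs]; norm_num [Nat.factorial]; ring
  have := abs_le.mp h
  nlinarith [sq_nonneg x]

lemma avg_exp_Z {k : ℕ} (s : ℝ) :
    (1/2^k) * ∑ τ : Fin k → Bool, Real.exp (s * ∑ i, (if τ i then (1:ℝ) else -1))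
      = ((Real.exp s + Real.exp (-s))/2)^k := by
  have h1 : ∀ τ : Fin k → Bool, Real.exp (s * ∑ i, (if τ i then (1:ℝ) else -1))
      = ∏ i, Real.exp (s * (if τ i then (1:ℝ) else -1)) := by
    intro τ
    rw [Finset.mul_sum, Real.exp_sum]
  rw [Finset.sum_congr rfl fun τ _ => h1 τ,
    sum_prod_bool (fun b => Real.exp (s * (if b then (1:ℝ) else -1)))]
  simp only [if_true, if_false, mul_one, mul_neg_one, ← Real.exp_neg]
  rw [div_pow]
  norm_num
  ring

lemma exp_quad' {x : ℝ} (h0 : 0 ≤ x) (h1 : x ≤ 1) : Real.exp x ≤ 1 + 2*x := by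
  have := exp_quad (x := x) (by rw [abs_of_nonneg h0]; exact h1)
  nlinarith

lemma W_bound (k : ℕ) (t : ℝ) (ht0 : 0 ≤ t) (ht1 : 2*t ≤ 1) (ht2 : (k:ℝ)*t^2 ≤ 1/32) :
    (1/2^k) * ∑ τ : Fin k → Bool, |Real.exp (t * ∑ i, (if τ i then (1:ℝ) else -1)) - 1|
      ≤ 1/2 := by
  set Z : (Fin k → Bool) → ℝ := fun τ => ∑ i, (if τ i then (1:ℝ) else -1) with hZ
  set W := (1/2^k) * ∑ τ : Fin k → Bool, |Real.exp (t * Z τ) - 1| with hW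
  have hpk : (0:ℝ) < 2^k := by positivity
  have hWnn : 0 ≤ W := by
    rw [hW]
    apply mul_nonneg (by positivity)
    exact Finset.sum_nonneg fun τ _ => abs_nonneg _
  -- Cauchy-Schwarz
  have hCS : W^2 ≤ (1/2^k) * ∑ τ : Fin k → Bool, (Real.exp (t * Z τ) - 1)^2 := by
    have := Finset.sum_mul_sq_le_sq_mul_sq Finset.univ
      (fun _ : Fin k → Bool => Real.sqrt (1/2^k))
      (fun τ : Fin k → Bool => Real.sqrt (1/2^k) * |Real.exp (t * Z τ) - 1|)
    have he : ∀ τ : Fin k → Bool, Real.sqrt (1/2^k) * (Real.sqrt (1/2^k) * |Real.exp (t * Z τ) - 1|)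
        = (1/2^k) * |Real.exp (t * Z τ) - 1| := by
      intro τ
      rw [← mul_assoc, Real.mul_self_sqrt (by positivity)]
    have hf : ∀ τ : Fin k → Bool, (Real.sqrt (1/2^k))^2 = (1/2^k : ℝ) :=
      fun _ => Real.sq_sqrt (by positivity)
    have hg : ∀ τ : Fin k → Bool,
        (Real.sqrt (1/2^k) * |Real.exp (t * Z τ) - 1|)^2
          = (1/2^k) * (Real.exp (t * Z τ) - 1)^2 := by
      intro τ
      rw [mul_pow, Real.sq_sqrt (by positivity), sq_abs]
    rw [Finset.sum_congr rfl fun τ _ => he τ, Finset.sum_congr rfl fun τ _ => hf τ,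
      Finset.sum_congr rfl fun τ _ => hg τ, ← Finset.mul_sum, ← Finset.mul_sum,
      Finset.sum_const] at this
    simp only [Finset.card_univ, Fintype.card_fun, Fintype.card_bool, Fintype.card_fin,
      nsmul_eq_mul] at this
    calc W^2 = ((1/2^k) * ∑ τ : Fin k → Bool, |Real.exp (t * Z τ) - 1|)^2 := by rw [hW]
      _ ≤ ((2:ℝ)^k * (1/2^k)) * ((1/2^k) * ∑ τ : Fin k → Bool, (Real.exp (t * Z τ) - 1)^2) := by
          push_cast at this
          exact this
      _ = (1/2^k) * ∑ τ : Fin k → Bool, (Real.exp (t * Z τ) - 1)^2 := by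
          rw [mul_one_div, div_self (ne_of_gt hpk), one_mul]
  -- expand the square
  have hexp : ∀ τ : Fin k → Bool, (Real.exp (t * Z τ) - 1)^2
      = Real.exp ((2*t) * Z τ) - 2 * Real.exp (t * Z τ) + 1 := by
    intro τ
    have : Real.exp (t * Z τ) * Real.exp (t * Z τ) = Real.exp ((2*t) * Z τ) := by
      rw [← Real.exp_add]; ring_nf
    nlinarith [this]
  have hsum : (1/2^k) * ∑ τ : Fin k → Bool, (Real.exp (t * Z τ) - 1)^2
      = ((Real.exp (2*t) + Real.exp (-(2*t)))/2)^k
        - 2 * ((Real.exp t + Real.exp (-t))/2)^k + 1 := by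
    rw [Finset.sum_congr rfl fun τ _ => hexp τ]
    rw [Finset.sum_add_distrib, Finset.sum_sub_distrib, Finset.sum_const]
    simp only [Finset.card_univ, Fintype.card_fun, Fintype.card_bool, Fintype.card_fin,
      nsmul_eq_mul, mul_one, hZ]
    have h2 := avg_exp_Z (k := k) (2*t)
    have h1 := avg_exp_Z (k := k) t
    push_cast
    rw [← h2, ← h1]
    have hpkne : ((2:ℝ)^k) ≠ 0 := ne_of_gt hpk
    field_simp
    rw [← Finset.mul_sum]
  -- numeric bounds
  have hc1 : 1 ≤ ((Real.exp t + Real.exp (-t))/2)^k := by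
    apply one_le_pow₀
    have := Real.add_one_le_exp t
    have := Real.add_one_le_exp (-t)
    linarith
  have hc2 : ((Real.exp (2*t) + Real.exp (-(2*t)))/2)^k ≤ 5/4 := by
    have he1 : Real.exp (2*t) ≤ 1 + 2*t + (2*t)^2 := exp_quad (by rw [abs_of_nonneg (by linarith)]; linarith)
    have he2 : Real.exp (-(2*t)) ≤ 1 - 2*t + (2*t)^2 := by
      have := exp_quad (x := -(2*t)) (by rw [abs_of_nonpos (by linarith)]; linarith)
      nlinarith
    have havg : (Real.exp (2*t) + Real.exp (-(2*t)))/2 ≤ 1 + 4*t^2 := by nlinarith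
    have hnn : (0:ℝ) ≤ (Real.exp (2*t) + Real.exp (-(2*t)))/2 := by
      positivity
    calc ((Real.exp (2*t) + Real.exp (-(2*t)))/2)^k ≤ (1 + 4*t^2)^k :=
          pow_le_pow_left₀ hnn havg k
      _ ≤ (Real.exp (4*t^2))^k := by
          apply pow_le_pow_left₀ (by positivity)
          have := Real.add_one_le_exp (4*t^2)
          linarith
      _ = Real.exp ((k:ℝ) * (4*t^2)) := by
          rw [← Real.exp_nat_mul]
      _ ≤ Real.exp (1/8) := by
          apply Real.exp_le_exp.mpr
          nlinarith
      _ ≤ 5/4 := by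
          have := exp_quad' (x := 1/8) (by norm_num) (by norm_num)
          linarith
  have hW2 : W^2 ≤ 1/4 := by
    rw [hsum] at hCS
    nlinarith
  nlinarith

lemma pair_bound {k : ℕ} (hk : 2 ≤ k) {ε ps : ℝ} (hε : 0 < ε) (hεhalf : ε < 1/2)
    (hps : 0 < ps) (hps1 : ps < 1) (m : ℕ) (t : ℝ)
    (htt : t = (m:ℝ) * ps * ε^2 / (k:ℝ)) (σ σ' : Fin k → Bool) :
    (∑ x : Fin m → Fin (2*k+1), trajP (MG (2*k) ps (pSigma k ε σ)) (pInit (2*k) ps) x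
        * trajP (MG (2*k) ps (pSigma k ε σ')) (pInit (2*k) ps) x
        / trajP (MG (2*k) ps (fun _ => 1/((2*k:ℕ):ℝ))) (pInit (2*k) ps) x)
      ≤ 1 + |Real.exp (t * ∑ i, (if σ i = σ' i then (1:ℝ) else -1)) - 1| := by
  have hd : 0 < 2*k := by omega
  have hkR : (2:ℝ) ≤ (k:ℝ) := by exact_mod_cast hk
  have hkpos : (0:ℝ) < (k:ℝ) := by linarith
  have hdR : ((2*k : ℕ):ℝ) = 2*(k:ℝ) := by push_cast; ring
  have hpSnn : ∀ (τ : Fin k → Bool) (l : Fin (2*k)), 0 ≤ pSigma k ε τ l := by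
    intro τ l
    unfold pSigma
    apply div_nonneg _ (by positivity)
    split <;> split <;> nlinarith
  have hpInn : ∀ i, 0 ≤ pInit (2*k) ps i := fun i => (pInit_pos hd hps hps1 i).le
  have hZabs : |∑ i, (if σ i = σ' i then (1:ℝ) else -1)| ≤ (k:ℝ) := by
    calc |∑ i, (if σ i = σ' i then (1:ℝ) else -1)|
        ≤ ∑ i : Fin k, |if σ i = σ' i then (1:ℝ) else -1| := Finset.abs_sum_le_sum_abs _ _
      _ ≤ ∑ _i : Fin k, (1:ℝ) := Finset.sum_le_sum fun i _ => by split <;> simp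
      _ = (k:ℝ) := by simp
  have hZlo := (abs_le.mp hZabs).1
  have hZhi := (abs_le.mp hZabs).2
  have hηKnn : ∀ l, 0 ≤ (fun l => ((2*k:ℕ):ℝ) * pSigma k ε σ l * pSigma k ε σ' l) l := by
    intro l
    have h1 := hpSnn σ l
    have h2 := hpSnn σ' l
    positivity
  have hSK : (∑ l, ((2*k:ℕ):ℝ) * pSigma k ε σ l * pSigma k ε σ' l)
      = 1 + ε^2/(k:ℝ) * ∑ i, (if σ i = σ' i then (1:ℝ) else -1) := by
    have h := sum_cross_pSigma hk ε σ σ'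
    calc (∑ l, ((2*k:ℕ):ℝ) * pSigma k ε σ l * pSigma k ε σ' l)
        = ∑ l, 2*(k:ℝ) * pSigma k ε σ l * pSigma k ε σ' l := by
          apply Finset.sum_congr rfl; intro l _; rw [hdR]
      _ = 1 + ε^2/(k:ℝ) * ∑ i, (if σ i = σ' i then (1:ℝ) else -1) := h
  have hKpt : ∀ x : Fin m → Fin (2*k+1),
      trajP (MG (2*k) ps (pSigma k ε σ)) (pInit (2*k) ps) x
        * trajP (MG (2*k) ps (pSigma k ε σ')) (pInit (2*k) ps) x
        / trajP (MG (2*k) ps (fun _ => 1/((2*k:ℕ):ℝ))) (pInit (2*k) ps) x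
      ≤ trajP (MG (2*k) ps (fun l => ((2*k:ℕ):ℝ) * pSigma k ε σ l * pSigma k ε σ' l))
          (pInit (2*k) ps) x := by
    intro x
    have hKnn : 0 ≤ trajP (MG (2*k) ps (fun l => ((2*k:ℕ):ℝ) * pSigma k ε σ l * pSigma k ε σ' l))
        (pInit (2*k) ps) x :=
      trajP_nonneg (MG_entry_nonneg hps.le hps1.le hηKnn) hpInn x
    by_cases hx : trajP (MG (2*k) ps (fun _ => 1/((2*k:ℕ):ℝ))) (pInit (2*k) ps) x = 0
    · rw [hx, div_zero]; exact hKnn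
    · rw [trajP_mul hd ps (pSigma k ε σ) (pSigma k ε σ') x, mul_div_assoc, div_self hx,
        mul_one]
  refine le_trans (Finset.sum_le_sum (s := (Finset.univ : Finset (Fin m → Fin (2*k+1))))
    (fun x _ => hKpt x)) ?_
  -- now it is uT
  have huT : (∑ x : Fin m → Fin (2*k+1),
      trajP (MG (2*k) ps (fun l => ((2*k:ℕ):ℝ) * pSigma k ε σ l * pSigma k ε σ' l))
        (pInit (2*k) ps) x)
      = uT (2*k) ps (fun l => ((2*k:ℕ):ℝ) * pSigma k ε σ l * pSigma k ε σ' l) m := rfl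
  rw [huT]
  set ZZ := ∑ i, (if σ i = σ' i then (1:ℝ) else -1) with hZZ
  have hε2 : ε^2 ≤ 1 := by nlinarith
  rcases le_or_gt (1 + ε^2/(k:ℝ) * ZZ) 1 with hS | hS
  · have hS0 : 0 ≤ 1 + ε^2/(k:ℝ) * ZZ := by
      have : ε^2/(k:ℝ) * ZZ ≥ ε^2/(k:ℝ) * (-(k:ℝ)) :=
        mul_le_mul_of_nonneg_left hZlo (by positivity)
      have heq : ε^2/(k:ℝ) * (-(k:ℝ)) = -ε^2 := by field_simp
      nlinarith
    have := uT_le_one hd hps.le hps1.le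
      (η := fun l => ((2*k:ℕ):ℝ) * pSigma k ε σ l * pSigma k ε σ' l)
      (by rw [hSK]; exact hS0) (by rw [hSK]; exact hS) m
    have habs : (0:ℝ) ≤ |Real.exp (t * ZZ) - 1| := abs_nonneg _
    linarith
  · have hub := uT_le_pow hd hps.le hps1.le (η := fun l => ((2*k:ℕ):ℝ) * pSigma k ε σ l * pSigma k ε σ' l)
      (by rw [hSK]; linarith) m
    rw [hSK] at hub
    have hstep : (1 + ps * (1 + ε^2/(k:ℝ) * ZZ - 1))^m ≤ Real.exp (t * ZZ) := by
      have ha : 0 ≤ ps * (ε^2/(k:ℝ) * ZZ) := by nlinarith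
      have h1 : 1 + ps * (1 + ε^2/(k:ℝ) * ZZ - 1) = 1 + ps * (ε^2/(k:ℝ) * ZZ) := by ring
      rw [h1]
      calc (1 + ps * (ε^2/(k:ℝ) * ZZ))^m
          ≤ (Real.exp (ps * (ε^2/(k:ℝ) * ZZ)))^m := by
            apply pow_le_pow_left₀ (by linarith)
            have := Real.add_one_le_exp (ps * (ε^2/(k:ℝ) * ZZ))
            linarith
        _ = Real.exp ((m:ℝ) * (ps * (ε^2/(k:ℝ) * ZZ))) := by rw [← Real.exp_nat_mul]
        _ = Real.exp (t * ZZ) := by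
            congr 1
            rw [htt]
            field_simp
    have hfin : Real.exp (t * ZZ) ≤ 1 + |Real.exp (t * ZZ) - 1| := by
      have := le_abs_self (Real.exp (t * ZZ) - 1)
      linarith
    linarith

set_option maxHeartbeats 2000000 in
/-- Lower bound `Ω(√d/(ε² p⋆))` for identity testing against the reference chain
`M_{U_d} ∈ G_{p⋆}`, via the mixture over sign vectors `σ ∈ {−1,+1}^{d/2}`. -/
theorem markov_identity_testing_proximity_lower_bound :
    ∃ c : ℝ, 0 < c ∧
      ∀ (k : ℕ), 2 ≤ k →
      ∀ (ε ps : ℝ), 0 < ε → ε < 1 / 2 → 0 < ps → ps ≤ 1 / (2 * (2 * (k : ℝ) + 1)) →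
        (∀ σ : Fin k → Bool, ∑ j : Fin (2 * k), |pSigma k ε σ j - 1 / (2 * (k : ℝ))| = ε) ∧
        (∀ m : ℕ, (m : ℝ) ≤ c * Real.sqrt (2 * k) / (ε ^ 2 * ps) →
          ∀ T : (Fin m → Fin (2 * k + 1)) → ℝ, (∀ x, 0 ≤ T x ∧ T x ≤ 1) →
            1 / 10 ≤
              (∑ x, trajP (MG (2 * k) ps (fun _ => 1 / (2 * (k : ℝ)))) (pInit (2 * k) ps) x
                  * T x) +
                (1 / 2 ^ k) * ∑ σ : Fin k → Bool,
                  ∑ x, trajP (MG (2 * k) ps (pSigma k ε σ)) (pInit (2 * k) ps) x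
                    * (1 - T x)) := by
  refine ⟨1/8, by norm_num, ?_⟩
  intro k hk ε ps hε hεhalf hps hpsle
  have hkR : (2:ℝ) ≤ (k:ℝ) := by exact_mod_cast hk
  have hkpos : (0:ℝ) < (k:ℝ) := by linarith
  have hd : 0 < 2*k := by omega
  have hdR : ((2*k : ℕ):ℝ) = 2*(k:ℝ) := by push_cast; ring
  have hps1 : ps < 1 := by
    have h10 : (10:ℝ) ≤ 2*(2*(k:ℝ)+1) := by linarith
    have := le_trans hpsle (one_div_le_one_div_of_le (by norm_num) h10)
    linarith
  refine ⟨fun σ => sum_abs_pSigma hk hε σ, ?_⟩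
  intro m hm T hT
  have hub : (fun _ : Fin (2*k) => 1/(2*(k:ℝ))) = (fun _ : Fin (2*k) => 1/((2*k:ℕ):ℝ)) := by
    funext _; rw [hdR]
  rw [hub]
  set Pb : (Fin m → Fin (2*k+1)) → ℝ :=
    trajP (MG (2*k) ps (fun _ => 1/((2*k:ℕ):ℝ))) (pInit (2*k) ps) with hPbdef
  set Ps : (Fin k → Bool) → (Fin m → Fin (2*k+1)) → ℝ :=
    fun σ => trajP (MG (2*k) ps (pSigma k ε σ)) (pInit (2*k) ps) with hPsdef
  -- sums to one
  have hPb1 : ∑ x, Pb x = 1 := by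
    have hS : (∑ _j : Fin (2*k), 1/((2*k:ℕ):ℝ)) = 1 := by
      rw [Finset.sum_const]
      simp only [Finset.card_univ, Fintype.card_fin, nsmul_eq_mul]
      rw [mul_one_div, div_self (by rw [hdR]; positivity)]
    simpa [hPbdef, uT, sT] using uT_eq_one hd ps hS m
  have hPs1 : ∀ σ, ∑ x, Ps σ x = 1 := by
    intro σ
    simpa [hPsdef, uT, sT] using uT_eq_one hd ps (sum_pSigma hk ε σ) m
  -- nonnegativity
  have hpSnn : ∀ σ (l : Fin (2*k)), 0 ≤ pSigma k ε σ l := by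
    intro σ l
    unfold pSigma
    apply div_nonneg _ (by positivity)
    split <;> split <;> nlinarith
  have hpInn : ∀ i, 0 ≤ pInit (2*k) ps i := fun i => (pInit_pos hd hps hps1 i).le
  have hPbnn : ∀ x, 0 ≤ Pb x := fun x =>
    trajP_nonneg (MG_entry_nonneg hps.le hps1.le (fun l => by positivity)) hpInn x
  -- zero pattern
  have hzero : ∀ x, Pb x = 0 → ∀ σ, Ps σ x = 0 :=
    fun x hx σ => trajP_zero_pattern hd hps hps1 (pSigma k ε σ) x hx
  set Q : (Fin m → Fin (2*k+1)) → ℝ := fun x => (1/2^k) * ∑ σ : Fin k → Bool, Ps σ x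
    with hQdef
  have hQzero : ∀ x, Pb x = 0 → Q x = 0 := by
    intro x hx
    simp only [hQdef]
    rw [Finset.sum_congr rfl fun σ _ => hzero x hx σ, Finset.sum_const]
    simp
  have hpk : (0:ℝ) < 2^k := by positivity
  have hcard : (Finset.univ : Finset (Fin k → Bool)).card = 2^k := by
    simp [Fintype.card_fun]
  have hQ1 : ∑ x, Q x = 1 := by
    simp only [hQdef]
    rw [← Finset.mul_sum, Finset.sum_comm, Finset.sum_congr rfl fun σ _ => hPs1 σ,
      Finset.sum_const, hcard]
    simp only [nsmul_eq_mul, mul_one]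
    push_cast
    field_simp
  -- restructure the goal
  have hsplit : ∀ σ, ∑ x, Ps σ x * (1 - T x) = 1 - ∑ x, Ps σ x * T x := by
    intro σ
    have h : ∀ x ∈ Finset.univ, Ps σ x * (1 - T x) = Ps σ x - Ps σ x * T x :=
      fun x _ => by ring
    rw [Finset.sum_congr rfl h, Finset.sum_sub_distrib, hPs1 σ]
  have hswap : (1/2^k : ℝ) * ∑ σ : Fin k → Bool, ∑ x, Ps σ x * T x = ∑ x, Q x * T x := by
    rw [Finset.sum_comm, Finset.mul_sum]
    apply Finset.sum_congr rfl
    intro x _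
    rw [← Finset.sum_mul, ← mul_assoc]
  have hgoal2 : (1/2^k : ℝ) * (∑ σ : Fin k → Bool, ∑ x, Ps σ x * (1 - T x))
      = 1 - ∑ x, Q x * T x := by
    rw [Finset.sum_congr rfl fun σ _ => hsplit σ, Finset.sum_sub_distrib, mul_sub, hswap,
      Finset.sum_const, hcard]
    simp only [nsmul_eq_mul, mul_one]
    congr 1
    push_cast
    field_simp
  -- main bound
  suffices hkey : ∑ x, (Q x - Pb x) * T x ≤ 9/10 by
    have hA : ∑ x, (Q x - Pb x) * T x = ∑ x, Q x * T x - ∑ x, Pb x * T x := by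
      rw [← Finset.sum_sub_distrib]
      exact Finset.sum_congr rfl fun x _ => by ring
    rw [hA] at hkey
    linarith [hgoal2]
  -- TV bound
  have hTV : ∑ x, (Q x - Pb x) * T x ≤ ∑ x, |Q x - Pb x| := by
    apply Finset.sum_le_sum
    intro x _
    calc (Q x - Pb x) * T x ≤ |(Q x - Pb x) * T x| := le_abs_self _
      _ = |Q x - Pb x| * T x := by rw [abs_mul, abs_of_nonneg (hT x).1]
      _ ≤ |Q x - Pb x| * 1 := mul_le_mul_of_nonneg_left (hT x).2 (abs_nonneg _)
      _ = |Q x - Pb x| := mul_one _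
  -- Cauchy-Schwarz to chi-square
  set V := ∑ x, (Q x - Pb x)^2 / Pb x with hVdef
  have hCS2 : (∑ x, |Q x - Pb x|)^2 ≤ V := by
    have hpt : ∀ x ∈ Finset.univ, |Q x - Pb x|
        = Real.sqrt (Pb x) * Real.sqrt ((Q x - Pb x)^2 / Pb x) := by
      intro x _
      by_cases hx : Pb x = 0
      · rw [hx, hQzero x hx]
        simp
      · rw [← Real.sqrt_mul (hPbnn x), mul_div_cancel₀ _ hx, Real.sqrt_sq_eq_abs]
    have hcs := Finset.sum_mul_sq_le_sq_mul_sq Finset.univ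
      (fun x => Real.sqrt (Pb x)) (fun x => Real.sqrt ((Q x - Pb x)^2 / Pb x))
    have h1 : ∀ x ∈ Finset.univ, (Real.sqrt (Pb x))^2 = Pb x :=
      fun x _ => Real.sq_sqrt (hPbnn x)
    have h2 : ∀ x ∈ Finset.univ, (Real.sqrt ((Q x - Pb x)^2 / Pb x))^2
        = (Q x - Pb x)^2 / Pb x :=
      fun x _ => Real.sq_sqrt (div_nonneg (sq_nonneg _) (hPbnn x))
    rw [Finset.sum_congr rfl h1, Finset.sum_congr rfl h2, hPb1, one_mul] at hcs
    calc (∑ x, |Q x - Pb x|)^2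
        = (∑ x, Real.sqrt (Pb x) * Real.sqrt ((Q x - Pb x)^2 / Pb x))^2 := by
          rw [Finset.sum_congr rfl hpt]
      _ ≤ V := hcs
  -- V = chi-square - 1
  have hVeq : V = (∑ x, Q x^2 / Pb x) - 1 := by
    have hpt : ∀ x ∈ Finset.univ, (Q x - Pb x)^2 / Pb x
        = Q x^2 / Pb x - 2 * Q x + Pb x := by
      intro x _
      by_cases hx : Pb x = 0
      · rw [hx, hQzero x hx]
        simp
      · field_simp
        ring
    rw [hVdef, Finset.sum_congr rfl hpt, Finset.sum_add_distrib, Finset.sum_sub_distrib,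
      ← Finset.mul_sum, hQ1, hPb1]
    ring
  -- numeric parameters
  set t := (m:ℝ) * ps * ε^2 / (k:ℝ) with htdef
  have hm' : (m:ℝ) * ps * ε^2 ≤ (1/8) * Real.sqrt (2*(k:ℝ)) := by
    have hpos : (0:ℝ) < ε^2 * ps := by positivity
    have := (le_div_iff₀ hpos).mp hm
    nlinarith
  have hsq2k : Real.sqrt (2*(k:ℝ)) ≤ (k:ℝ) := by
    have h1 : Real.sqrt (2*(k:ℝ)) ≤ Real.sqrt ((k:ℝ)^2) := Real.sqrt_le_sqrt (by nlinarith)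
    have h2 : Real.sqrt ((k:ℝ)^2) = (k:ℝ) := Real.sqrt_sq hkpos.le
    linarith
  have hmnn : (0:ℝ) ≤ (m:ℝ) * ps * ε^2 := by positivity
  have ht0 : 0 ≤ t := by rw [htdef]; positivity
  have ht18 : t ≤ 1/8 := by
    rw [htdef, div_le_iff₀ hkpos]
    nlinarith
  have ht1 : 2*t ≤ 1 := by linarith
  have hkt2 : (k:ℝ)*t^2 ≤ 1/32 := by
    have hsq : (Real.sqrt (2*(k:ℝ)))^2 = 2*(k:ℝ) := Real.sq_sqrt (by positivity)
    have ha2 : ((m:ℝ)*ps*ε^2)^2 ≤ (1/64)*(2*(k:ℝ)) := by nlinarith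
    have hrw : (k:ℝ)*t^2 = ((m:ℝ)*ps*ε^2)^2/(k:ℝ) := by
      rw [htdef]; field_simp
    rw [hrw, div_le_iff₀ hkpos]
    nlinarith
  -- chi-square bound
  have hQ2 : (∑ x, Q x^2 / Pb x) ≤ 3/2 := by
    have hptx : ∀ x ∈ Finset.univ, Q x^2 / Pb x
        = (1/2^k:ℝ)^2 * ∑ σ : Fin k → Bool, ∑ σ' : Fin k → Bool,
            (Ps σ x * Ps σ' x / Pb x) := by
      intro x _
      simp only [hQdef]
      rw [mul_pow, sq (∑ σ : Fin k → Bool, Ps σ x), Finset.sum_mul_sum, mul_div_assoc]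
      congr 1
      rw [Finset.sum_div]
      exact Finset.sum_congr rfl fun σ _ => Finset.sum_div _ _ _
    rw [Finset.sum_congr rfl hptx, ← Finset.mul_sum]
    have hsw : (∑ x, ∑ σ : Fin k → Bool, ∑ σ' : Fin k → Bool, Ps σ x * Ps σ' x / Pb x)
        = ∑ σ : Fin k → Bool, ∑ σ' : Fin k → Bool, ∑ x, Ps σ x * Ps σ' x / Pb x := by
      rw [Finset.sum_comm]
      exact Finset.sum_congr rfl fun σ _ => Finset.sum_comm
    rw [hsw]
    have hpair : ∀ σ σ' : Fin k → Bool,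
        (∑ x, Ps σ x * Ps σ' x / Pb x)
          ≤ 1 + |Real.exp (t * ∑ i, (if σ i = σ' i then (1:ℝ) else -1)) - 1| := by
      intro σ σ'
      exact pair_bound hk hε hεhalf hps hps1 m t htdef σ σ'
    have hbound := Finset.sum_le_sum (s := (Finset.univ : Finset (Fin k → Bool)))
      (fun σ _ => Finset.sum_le_sum (s := (Finset.univ : Finset (Fin k → Bool)))
        (fun σ' _ => hpair σ σ'))
    have hev : (∑ σ : Fin k → Bool, ∑ σ' : Fin k → Bool,
          (1 + |Real.exp (t * ∑ i, (if σ i = σ' i then (1:ℝ) else -1)) - 1|))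
        = (2^k:ℝ) * ((2^k:ℝ) + ∑ τ : Fin k → Bool,
            |Real.exp (t * ∑ i, (if τ i then (1:ℝ) else -1)) - 1|) := by
      have hσ : ∀ σ : Fin k → Bool, (∑ σ' : Fin k → Bool,
            (1 + |Real.exp (t * ∑ i, (if σ i = σ' i then (1:ℝ) else -1)) - 1|))
          = (2^k:ℝ) + ∑ τ : Fin k → Bool,
              |Real.exp (t * ∑ i, (if τ i then (1:ℝ) else -1)) - 1| := by
        intro σ
        rw [Finset.sum_add_distrib, Finset.sum_const, hcard]
        congr 1
        · simp
        · have hform : ∀ σ' : Fin k → Bool,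
              (∑ i, if σ i = σ' i then (1:ℝ) else -1)
                = ∑ i, (if (fun i => σ i == σ' i) i then (1:ℝ) else -1) := by
            intro σ'
            apply Finset.sum_congr rfl
            intro i _
            simp only [beq_iff_eq]
          calc (∑ σ' : Fin k → Bool,
                |Real.exp (t * ∑ i, (if σ i = σ' i then (1:ℝ) else -1)) - 1|)
              = ∑ σ' : Fin k → Bool,
                |Real.exp (t * ∑ i, (if (fun i => σ i == σ' i) i then (1:ℝ) else -1)) - 1| := by
                exact Finset.sum_congr rfl fun σ' _ => by rw [hform σ']
            _ = ∑ τ : Fin k → Bool,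
                |Real.exp (t * ∑ i, (if τ i then (1:ℝ) else -1)) - 1| :=
                sum_bij_beq σ (fun τ => |Real.exp (t * ∑ i, (if τ i then (1:ℝ) else -1)) - 1|)
      rw [Finset.sum_congr rfl fun σ _ => hσ σ, Finset.sum_const, hcard]
      simp only [nsmul_eq_mul]
      push_cast
      ring
    have hW := W_bound k t ht0 ht1 hkt2
    calc (1/2^k:ℝ)^2 * ∑ σ : Fin k → Bool, ∑ σ' : Fin k → Bool, ∑ x, Ps σ x * Ps σ' x / Pb x
        ≤ (1/2^k:ℝ)^2 * ((2^k:ℝ) * ((2^k:ℝ) + ∑ τ : Fin k → Bool,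
            |Real.exp (t * ∑ i, (if τ i then (1:ℝ) else -1)) - 1|)) := by
          apply mul_le_mul_of_nonneg_left _ (by positivity)
          rw [← hev]
          exact hbound
      _ = 1 + (1/2^k:ℝ) * ∑ τ : Fin k → Bool,
            |Real.exp (t * ∑ i, (if τ i then (1:ℝ) else -1)) - 1| := by
          field_simp
      _ ≤ 1 + 1/2 := by linarith
      _ = 3/2 := by norm_num
  -- finish
  have hV12 : V ≤ 1/2 := by rw [hVeq]; linarith
  have habs_nonneg : 0 ≤ ∑ x, |Q x - Pb x| := Finset.sum_nonneg fun x _ => abs_nonneg _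
  nlinarith [hCS2, hTV]


end
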